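/- Each of the permutations a : t ↦ t+1, b : t ↦ 3t, and c = (3 9)(4 10)(5 6)(7 11) of F_13 maps every line {t, t+1, t+3, t+9} of the projective plane of order 3 to another such line. -/
import Mathlib

def Line2 (t : ZMod 13) : Set (ZMod 13) := {t, t + 1, t + 3, t + 9}

instance : Fact (Nat.Prime 13) := ⟨by norm_num⟩

noncomputable def aPerm : Equiv.Perm (ZMod 13) := Equiv.addRight 1

noncomputable def bPerm : Equiv.Perm (ZMod 13) :=
  Equiv.mulLeft₀ (3 : ZMod 13) (by decide)

noncomputable def cPerm : Equiv.Perm (ZMod 13) :=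
  Equiv.swap 3 9 * Equiv.swap 4 10 * Equiv.swap 5 6 * Equiv.swap 7 11

def csMap (t : ZMod 13) : ZMod 13 :=
  if t = 2 then 6 else if t = 3 then 9 else if t = 4 then 10
  else if t = 6 then 2 else if t = 7 then 8 else if t = 8 then 7
  else if t = 9 then 3 else if t = 10 then 4 else t

lemma line_img (f : Equiv.Perm (ZMod 13)) (t s : ZMod 13)
    (h : ∀ x : ZMod 13,
      (x = f t ∨ x = f (t + 1) ∨ x = f (t + 3) ∨ x = f (t + 9)) ↔
      (x = s ∨ x = s + 1 ∨ x = s + 3 ∨ x = s + 9)) :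
    f '' Line2 t = Line2 s := by
  ext x
  simp only [Line2, Set.image_insert_eq, Set.image_singleton, Set.mem_insert_iff,
    Set.mem_singleton_iff]
  exact h x

theorem generators_preserve_lines :
    (∀ t : ZMod 13, ∃ s : ZMod 13, aPerm '' Line2 t = Line2 s) ∧
    (∀ t : ZMod 13, ∃ s : ZMod 13, bPerm '' Line2 t = Line2 s) ∧
    (∀ t : ZMod 13, ∃ s : ZMod 13, cPerm '' Line2 t = Line2 s) := by
  refine ⟨fun t => ⟨t + 1, line_img _ _ _ ?_⟩,
          fun t => ⟨3 * t, line_img _ _ _ ?_⟩,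
          fun t => ⟨csMap t, line_img _ _ _ ?_⟩⟩ <;> revert t <;> decide
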